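/- arXiv:2011.11864 — 4 statements merged into one kernel-verified Lean document; each statement's English description precedes it below -/
import Mathlib

section
/- Let |ψ⟩ be a pure state on a four-fold tensor product H_A ⊗ H_B ⊗ H_C ⊗ H_D of finite-dimensional Hilbert spaces. If |ψ⟩ factorizes as |ψ_AB⟩ ⊗ |ψ_CD⟩ across the bipartition (AB, CD) and also as |ψ_AD⟩ ⊗ |ψ_BC⟩ across (AD, BC), then |ψ⟩ is a full product state |ψ_A⟩ ⊗ |ψ_B⟩ ⊗ |ψ_C⟩ ⊗ |ψ_D⟩. -/
/-- A pure state on `H_A ⊗ H_B ⊗ H_C ⊗ H_D` (written in coordinates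
with respect to orthonormal bases of the finite-dimensional factors) that factorizes
across the bipartitions `(AB, CD)` and `(AD, BC)` is a full product state. -/
theorem product_across_two_bipartitions_is_full_product
    (nA nB nC nD : ℕ) (ψ : Fin nA × Fin nB × Fin nC × Fin nD → ℂ)
    (hnorm : ∑ x : Fin nA × Fin nB × Fin nC × Fin nD, Complex.normSq (ψ x) = 1)
    (hABCD : ∃ (u : Fin nA × Fin nB → ℂ) (v : Fin nC × Fin nD → ℂ),
      ∀ a b c d, ψ (a, b, c, d) = u (a, b) * v (c, d))
    (hADBC : ∃ (u : Fin nA × Fin nD → ℂ) (v : Fin nB × Fin nC → ℂ),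
      ∀ a b c d, ψ (a, b, c, d) = u (a, d) * v (b, c)) :
    ∃ (f : Fin nA → ℂ) (g : Fin nB → ℂ) (h : Fin nC → ℂ) (k : Fin nD → ℂ),
      ∀ a b c d, ψ (a, b, c, d) = f a * g b * h c * k d := by
  obtain ⟨u, v, huv⟩ := hABCD
  obtain ⟨p, q, hpq⟩ := hADBC
  have hne : ∃ x, ψ x ≠ 0 := by
    by_contra h
    push_neg at h
    simp [h] at hnorm
  obtain ⟨⟨a0, b0, c0, d0⟩, h0⟩ := hne
  refine ⟨fun a => u (a, b0), fun b => u (a0, b) / ψ (a0, b0, c0, d0),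
    fun c => v (c, d0), fun d => v (c0, d), ?_⟩
  intro a b c d
  have key : ψ (a, b, c, d) * ψ (a0, b0, c0, d0)
      = ψ (a, b0, c0, d) * ψ (a0, b, c, d0) := by
    rw [hpq a b c d, hpq a0 b0 c0 d0, hpq a b0 c0 d, hpq a0 b c d0]; ring
  rw [huv a b0 c0 d, huv a0 b c d0] at key
  field_simp
  linear_combination key
end

section
/- If a pure state ψ on H_A ⊗ H_B ⊗ H_C ⊗ H_D factorizes as a product across the bipartitions (AB,CD) and (AD,BC), then its reduced density matrix on A⊗D is a product ρ_A ⊗ ρ_D and has rank 1, hence ρ_A and ρ_D are both pure. -/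
open Kronecker

/-- Reduced density matrix of a four-party pure state (in coordinates) on `A ⊗ D`:
partial trace of `|ψ⟩⟨ψ|` over `H_B ⊗ H_C`. -/
noncomputable def rhoAD {nA nB nC nD : ℕ}
    (ψ : Fin nA × Fin nB × Fin nC × Fin nD → ℂ) :
    Matrix (Fin nA × Fin nD) (Fin nA × Fin nD) ℂ :=
  Matrix.of fun p q =>
    ∑ b : Fin nB, ∑ c : Fin nC,
      ψ (p.1, b, c, p.2) * (starRingEnd ℂ) (ψ (q.1, b, c, q.2))

/-!
Fixing `(b₀, c₀)` with `v₂ (b₀, c₀) ≠ 0`, the two factorizations give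
`ψ (a, b, c, d) · v₂ (b₀, c₀) = ψ (a, b₀, c₀, d) · v₂ (b, c) = u₁ (a, b₀) v₁ (c₀, d) · v₂ (b, c)`,
so `ψ (a, b, c, d) = f a · g d · w (b, c)`. Tracing out `B` and `C` leaves
`ρ_AD = ‖w‖² |f ⊗ g⟩⟨f ⊗ g| = (‖w‖² |f⟩⟨f|) ⊗ |g⟩⟨g|`, and all three outer products have
rank one because the normalization forces `ψ`, hence `f`, `g` and `w`, to be nonzero.
-/

namespace Matrix

theorem rank_vecMulVec_eq_one {K m n : Type*} [Field K] [Fintype n] [DecidableEq n]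
    {x : m → K} {y : n → K} (hx : x ≠ 0) (hy : y ≠ 0) : (vecMulVec x y).rank = 1 := by
  obtain ⟨i, hi⟩ : ∃ i, x i ≠ 0 := Function.ne_iff.mp hx
  obtain ⟨j, hj⟩ : ∃ j, y j ≠ 0 := Function.ne_iff.mp hy
  refine le_antisymm (rank_vecMulVec_le x y) (Nat.one_le_iff_ne_zero.mpr fun h0 => ?_)
  have hcol : vecMulVec x y *ᵥ Pi.single j 1 ∈ LinearMap.range (vecMulVec x y).mulVecLin :=
    ⟨Pi.single j 1, rfl⟩
  rw [Submodule.finrank_eq_zero.mp h0, Submodule.mem_bot] at hcol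
  exact mul_ne_zero hi hj (by simpa [mulVec_single, vecMulVec_apply] using congrFun hcol i)

theorem vecMulVec_kronecker_vecMulVec {R l m n p : Type*} [CommSemigroup R]
    (x : l → R) (y : m → R) (z : n → R) (w : p → R) :
    vecMulVec x y ⊗ₖ vecMulVec z w =
      vecMulVec (fun i => x i.1 * z i.2) (fun j => y j.1 * w j.2) := by
  ext ⟨i, i'⟩ ⟨j, j'⟩
  exact mul_mul_mul_comm _ _ _ _

end Matrix

open Matrix

theorem exists_eq_mul_mul_of_factorizations {K α β γ δ : Type*} [Field K]
    {ψ : α × β × γ × δ → K} {u₁ : α × β → K} {v₁ : γ × δ → K} {u₂ : α × δ → K}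
    {v₂ : β × γ → K} (h₁ : ∀ a b c d, ψ (a, b, c, d) = u₁ (a, b) * v₁ (c, d))
    (h₂ : ∀ a b c d, ψ (a, b, c, d) = u₂ (a, d) * v₂ (b, c)) :
    ∃ (f : α → K) (g : δ → K) (w : β × γ → K),
      ∀ a b c d, ψ (a, b, c, d) = f a * g d * w (b, c) := by
  by_cases hv : v₂ = 0
  · exact ⟨0, 0, 0, by simp [h₂, hv]⟩
  obtain ⟨⟨b₀, c₀⟩, hv₀⟩ : ∃ p, v₂ p ≠ 0 := Function.ne_iff.mp hv
  refine ⟨fun a => u₁ (a, b₀), fun d => v₁ (c₀, d), fun p => v₂ p / v₂ (b₀, c₀),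
    fun a b c d => ?_⟩
  rw [← h₁, h₂, h₂]
  field_simp

theorem rhoAD_eq_smul_vecMulVec {nA nB nC nD : ℕ} {ψ : Fin nA × Fin nB × Fin nC × Fin nD → ℂ}
    {φ : Fin nA × Fin nD → ℂ} {w : Fin nB × Fin nC → ℂ}
    (h : ∀ a b c d, ψ (a, b, c, d) = φ (a, d) * w (b, c)) :
    rhoAD ψ = ((∑ p, Complex.normSq (w p) : ℝ) : ℂ) • vecMulVec φ (star φ) := by
  ext p q
  simp only [rhoAD, of_apply, Matrix.smul_apply, vecMulVec_apply, h, Fintype.sum_prod_type,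
    Complex.ofReal_sum, Finset.sum_mul, smul_eq_mul, Pi.star_apply, RCLike.star_def]
  refine Finset.sum_congr rfl fun b _ => Finset.sum_congr rfl fun c _ => ?_
  rw [← Complex.mul_conj, map_mul]
  ring

/-- If a pure state `ψ` on `H_A ⊗ H_B ⊗ H_C ⊗ H_D` factorizes across
the bipartitions `(AB, CD)` and `(AD, BC)`, then its reduced density matrix on
`A ⊗ D` is a product `ρ_A ⊗ ρ_D` of rank 1, with both factors rank-1 (pure). -/
theorem rhoAD_product_and_rank_one
    (nA nB nC nD : ℕ) (ψ : Fin nA × Fin nB × Fin nC × Fin nD → ℂ)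
    (hnorm : ∑ x : Fin nA × Fin nB × Fin nC × Fin nD, Complex.normSq (ψ x) = 1)
    (hABCD : ∃ (u : Fin nA × Fin nB → ℂ) (v : Fin nC × Fin nD → ℂ),
      ∀ a b c d, ψ (a, b, c, d) = u (a, b) * v (c, d))
    (hADBC : ∃ (u : Fin nA × Fin nD → ℂ) (v : Fin nB × Fin nC → ℂ),
      ∀ a b c d, ψ (a, b, c, d) = u (a, d) * v (b, c)) :
    ∃ (ρA : Matrix (Fin nA) (Fin nA) ℂ) (ρD : Matrix (Fin nD) (Fin nD) ℂ),
      rhoAD ψ = ρA ⊗ₖ ρD ∧ (rhoAD ψ).rank = 1 ∧ ρA.rank = 1 ∧ ρD.rank = 1 := by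
  obtain ⟨⟨a₀, b₀, c₀, d₀⟩, hψ₀⟩ : ∃ x, ψ x ≠ 0 := by
    by_contra! h
    simp [h] at hnorm
  obtain ⟨u₁, v₁, h₁⟩ := hABCD
  obtain ⟨u₂, v₂, h₂⟩ := hADBC
  obtain ⟨f, g, w, hψ⟩ := exists_eq_mul_mul_of_factorizations h₁ h₂
  rw [hψ] at hψ₀
  set φ : Fin nA × Fin nD → ℂ := fun p => f p.1 * g p.2
  have hf : f ≠ 0 := Function.ne_iff.mpr ⟨a₀, left_ne_zero_of_mul (left_ne_zero_of_mul hψ₀)⟩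
  have hg : g ≠ 0 := Function.ne_iff.mpr ⟨d₀, right_ne_zero_of_mul (left_ne_zero_of_mul hψ₀)⟩
  have hφ : φ ≠ 0 := Function.ne_iff.mpr ⟨(a₀, d₀), left_ne_zero_of_mul hψ₀⟩
  set S : ℝ := ∑ p, Complex.normSq (w p)
  have hS : 0 < S := Finset.sum_pos' (fun p _ => Complex.normSq_nonneg _)
    ⟨(b₀, c₀), Finset.mem_univ _, Complex.normSq_pos.mpr (right_ne_zero_of_mul hψ₀)⟩
  have hS' : (S : ℂ) ∈ nonZeroDivisors ℂ :=
    mem_nonZeroDivisors_of_ne_zero (Complex.ofReal_ne_zero.mpr hS.ne')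
  have hρ : rhoAD ψ = (S : ℂ) • vecMulVec φ (star φ) := rhoAD_eq_smul_vecMulVec hψ
  refine ⟨(S : ℂ) • vecMulVec f (star f), vecMulVec g (star g), ?_, ?_, ?_, ?_⟩
  · rw [hρ, smul_kronecker, vecMulVec_kronecker_vecMulVec]
    congr 2
    ext p
    exact star_mul' _ _
  · rw [hρ, rank_smul_of_mem_nonZeroDivisors _ hS']
    exact rank_vecMulVec_eq_one hφ (star_ne_zero.mpr hφ)
  · rw [rank_smul_of_mem_nonZeroDivisors _ hS']
    exact rank_vecMulVec_eq_one hf (star_ne_zero.mpr hf)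
  · exact rank_vecMulVec_eq_one hg (star_ne_zero.mpr hg)
end

section
/- For a pure tripartite state ψ on H_A ⊗ H_B ⊗ H_C and any purification of ρ_AB to C = C_L ⊗ C_R, the quantity 2S(AC_L) − I(A:B) decomposes as I(C_L : BC_R | A) + I(C_R : A | B), where I(X:Y|Z) is the quantum conditional mutual information; in particular 2S(AC_L) ≥ I(A:B). -/
/-!
Writing out the two conditional mutual informations, the `S(A B C_R)` terms cancel, and the
identity reduces to `S(A C_L) = S(B C_R)` and `S(A B C_L C_R) = 0`. Both are facts about pure
states: if `ψ` is viewed as a matrix `M` from one subsystem to its complement, the two reduced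
density matrices are `M Mᴴ` and `(Mᴴ M)ᵀ`, which have the same nonzero spectrum, and the
reduced density matrix on the trivial system `Unit` is the `1 × 1` matrix `‖ψ‖² = 1`.
The inequality then follows from strong subadditivity.
-/

open scoped Classical ComplexOrder

/-- von Neumann entropy of a (Hermitian) matrix, via its spectrum. -/
noncomputable def vnEntropy {n : Type*} [Fintype n] [DecidableEq n]
    (ρ : Matrix n n ℂ) : ℝ :=
  if h : ρ.IsHermitian then -∑ i, h.eigenvalues i * Real.log (h.eigenvalues i) else 0

/-- Reduced density matrix of a bipartite pure state `ψ : α × β → ℂ` on `α`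
(partial trace of `|ψ⟩⟨ψ|` over `β`). -/
noncomputable def redDM {α β : Type*} [Fintype β] (ψ : α × β → ℂ) : Matrix α α ℂ :=
  Matrix.of fun a a' => ∑ b, ψ (a, b) * (starRingEnd ℂ) (ψ (a', b))

/-- Entanglement entropy of the subsystem `α` for the bipartite pure state `ψ`. -/
noncomputable def SE {α β : Type*} [Fintype α] [DecidableEq α] [Fintype β]
    (ψ : α × β → ℂ) : ℝ := vnEntropy (redDM ψ)

section
variable {nA nB nL nR : ℕ} (ψ : Fin nA × Fin nB × Fin nL × Fin nR → ℂ)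

/-- `S(A)` for a pure state on `A ⊗ B ⊗ C_L ⊗ C_R`. -/
noncomputable def S_A : ℝ := SE ψ
/-- `S(B)`. -/
noncomputable def S_B : ℝ :=
  SE (fun p : Fin nB × (Fin nA × Fin nL × Fin nR) => ψ (p.2.1, p.1, p.2.2))
/-- `S(AB)`. -/
noncomputable def S_AB : ℝ :=
  SE (fun p : (Fin nA × Fin nB) × (Fin nL × Fin nR) => ψ (p.1.1, p.1.2, p.2.1, p.2.2))
/-- `S(A C_L)`. -/
noncomputable def S_ACL : ℝ :=
  SE (fun p : (Fin nA × Fin nL) × (Fin nB × Fin nR) => ψ (p.1.1, p.2.1, p.1.2, p.2.2))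
/-- `S(A B C_R)`. -/
noncomputable def S_ABCR : ℝ :=
  SE (fun p : (Fin nA × Fin nB × Fin nR) × Fin nL => ψ (p.1.1, p.1.2.1, p.2, p.1.2.2))
/-- `S(B C_R)`. -/
noncomputable def S_BCR : ℝ :=
  SE (fun p : (Fin nB × Fin nR) × (Fin nA × Fin nL) => ψ (p.2.1, p.1.1, p.2.2, p.1.2))
/-- `S(A B C_L C_R)` (entropy of the full, pure, state). -/
noncomputable def S_full : ℝ :=
  SE (fun p : (Fin nA × Fin nB × Fin nL × Fin nR) × Unit => ψ p.1)

/-- The conditional mutual information `I(C_L : B C_R | A)`. -/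
noncomputable def CMI₁ : ℝ := S_ACL ψ + S_ABCR ψ - S_full ψ - S_A ψ
/-- The conditional mutual information `I(C_R : A | B)`. -/
noncomputable def CMI₂ : ℝ := S_BCR ψ + S_AB ψ - S_ABCR ψ - S_B ψ

end

open Matrix Polynomial Real

section Entropy

variable {m n : Type*} [Fintype m] [Fintype n] [DecidableEq m] [DecidableEq n]

theorem vnEntropy_eq_sum_roots_charpoly {A : Matrix n n ℂ} (hA : A.IsHermitian) :
    vnEntropy A = (A.charpoly.roots.map fun z => negMulLog z.re).sum := by
  rw [vnEntropy, dif_pos hA, hA.roots_charpoly_eq_eigenvalues, Multiset.map_map,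
    ← Finset.sum_eq_multiset_sum, ← Finset.sum_neg_distrib]
  simp [negMulLog]

theorem vnEntropy_transpose {A : Matrix n n ℂ} (hA : A.IsHermitian) :
    vnEntropy Aᵀ = vnEntropy A := by
  rw [vnEntropy_eq_sum_roots_charpoly hA.transpose, vnEntropy_eq_sum_roots_charpoly hA,
    charpoly_transpose]

theorem vnEntropy_mul_conjTranspose_comm (M : Matrix m n ℂ) :
    vnEntropy (M * Mᴴ) = vnEntropy (Mᴴ * M) := by
  have hroots := congrArg roots (charpoly_mul_comm' M Mᴴ)
  rw [roots_mul (mul_ne_zero (pow_ne_zero _ X_ne_zero) (charpoly_monic _).ne_zero),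
    roots_mul (mul_ne_zero (pow_ne_zero _ X_ne_zero) (charpoly_monic _).ne_zero),
    roots_X_pow, roots_X_pow] at hroots
  -- the extra zero eigenvalues contribute `negMulLog 0 = 0`
  have hsum := congrArg (fun s => (s.map fun z : ℂ => negMulLog z.re).sum) hroots
  simp only [Multiset.map_add, Multiset.sum_add, Multiset.map_nsmul, Multiset.sum_nsmul,
    Multiset.map_singleton, Multiset.sum_singleton, Complex.zero_re, negMulLog_zero,
    smul_zero, zero_add] at hsum
  rw [vnEntropy_eq_sum_roots_charpoly (isHermitian_mul_conjTranspose_self M),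
    vnEntropy_eq_sum_roots_charpoly (isHermitian_conjTranspose_mul_self M), hsum]

theorem vnEntropy_one : vnEntropy (1 : Matrix n n ℂ) = 0 := by
  rw [vnEntropy_eq_sum_roots_charpoly isHermitian_one, charpoly_one, ← C_1, roots_pow,
    roots_X_sub_C, Multiset.map_nsmul, Multiset.sum_nsmul, Multiset.map_singleton,
    Multiset.sum_singleton, Complex.one_re, negMulLog_one, smul_zero]

end Entropy

theorem redDM_eq_mul_conjTranspose {α β : Type*} [Fintype β] (ψ : α × β → ℂ) :
    redDM ψ = Matrix.of (Function.curry ψ) * (Matrix.of (Function.curry ψ))ᴴ := by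
  ext a a'
  simp [redDM, mul_apply]

section PureState

variable {α β : Type*} [Fintype α] [Fintype β] [DecidableEq α] [DecidableEq β]

theorem SE_swap (ψ : α × β → ℂ) : SE ψ = SE (ψ ∘ Prod.swap) := by
  set M := Matrix.of (Function.curry ψ)
  have hswap : Matrix.of (Function.curry (ψ ∘ Prod.swap)) = Mᵀ := rfl
  rw [SE, SE, redDM_eq_mul_conjTranspose, redDM_eq_mul_conjTranspose, hswap,
    vnEntropy_mul_conjTranspose_comm, conjTranspose_transpose_eq_transpose_conjTranspose,
    ← transpose_mul, vnEntropy_transpose (isHermitian_conjTranspose_mul_self M)]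

theorem SE_prod_unit_of_normalized (ψ : α → ℂ) (hψ : ∑ a, Complex.normSq (ψ a) = 1) :
    SE (fun p : α × Unit => ψ p.1) = 0 := by
  have hone : redDM (fun p : Unit × α => ψ p.2) = 1 := by
    ext u u'
    simp [redDM, Complex.mul_conj, ← Complex.ofReal_sum, hψ]
  rw [SE_swap, SE, Function.comp_def]
  simp only [Prod.fst_swap, hone, vnEntropy_one]

end PureState

/-- For a pure state `ψ` on `A ⊗ B ⊗ C_L ⊗ C_R` (a purification of
`ρ_AB`), `2 S(A C_L) − I(A:B) = I(C_L : B C_R | A) + I(C_R : A | B)`; in particular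
(using strong subadditivity, i.e. nonnegativity of conditional mutual information,
which may be assumed) `2 S(A C_L) ≥ I(A:B)`. -/
theorem two_SACL_sub_I_eq_sum_CMI (nA nB nL nR : ℕ)
    (ψ : Fin nA × Fin nB × Fin nL × Fin nR → ℂ)
    (hnorm : ∑ x : Fin nA × Fin nB × Fin nL × Fin nR, Complex.normSq (ψ x) = 1)
    (hSSA₁ : 0 ≤ CMI₁ ψ) (hSSA₂ : 0 ≤ CMI₂ ψ) :
    2 * S_ACL ψ - (S_A ψ + S_B ψ - S_AB ψ) = CMI₁ ψ + CMI₂ ψ ∧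
      S_A ψ + S_B ψ - S_AB ψ ≤ 2 * S_ACL ψ := by
  have hcomplement : S_ACL ψ = S_BCR ψ := SE_swap _
  have hpure : S_full ψ = 0 := SE_prod_unit_of_normalized ψ hnorm
  have hidentity : 2 * S_ACL ψ - (S_A ψ + S_B ψ - S_AB ψ) = CMI₁ ψ + CMI₂ ψ := by
    simp only [CMI₁, CMI₂]
    linarith
  exact ⟨hidentity, by linarith⟩
end

section
/- Let ρ_ABC be a state on H_A ⊗ H_B ⊗ H_C of the form ρ_ABC = ∑_i q_i ρ^i_{A B_L} ⊗ ρ^i_{B_R C}, where H_B = ⊕_i H^i_{B_L} ⊗ H^i_{B_R} is an orthogonal decomposition, q_i ≥ 0, ∑ q_i = 1. Then I(A:C|B) = 0, i.e., S(AB) + S(BC) = S(ABC) + S(B). -/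
open scoped Classical ComplexOrder

/-- Partial trace over the third factor. -/
noncomputable def ptrC {α β γ : Type*} [Fintype γ]
    (ρ : Matrix (α × β × γ) (α × β × γ) ℂ) : Matrix (α × β) (α × β) ℂ :=
  Matrix.of fun p q => ∑ c, ρ (p.1, p.2, c) (q.1, q.2, c)

/-- Partial trace over the first factor. -/
noncomputable def ptrA {α β γ : Type*} [Fintype α]
    (ρ : Matrix (α × β × γ) (α × β × γ) ℂ) : Matrix (β × γ) (β × γ) ℂ :=
  Matrix.of fun p q => ∑ a, ρ (a, p.1, p.2) (a, q.1, q.2)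

/-- Partial trace over the first and third factors. -/
noncomputable def ptrAC {α β γ : Type*} [Fintype α] [Fintype γ]
    (ρ : Matrix (α × β × γ) (α × β × γ) ℂ) : Matrix β β ℂ :=
  Matrix.of fun b b' => ∑ a, ∑ c, ρ (a, b, c) (a, b', c)

section
variable {nA nC k : ℕ} {bL bR : Fin k → ℕ}

/-- The state `ρ_ABC = ∑ᵢ wᵢ ρ¹ᵢ_{A B_L} ⊗ ρ²ᵢ_{B_R C}` associated to an orthogonal
decomposition `H_B = ⊕ᵢ H^i_{B_L} ⊗ H^i_{B_R}` (realised as a sigma type). -/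
noncomputable def blockDM (w : Fin k → ℝ)
    (ρ₁ : ∀ i : Fin k, Matrix (Fin nA × Fin (bL i)) (Fin nA × Fin (bL i)) ℂ)
    (ρ₂ : ∀ i : Fin k, Matrix (Fin (bR i) × Fin nC) (Fin (bR i) × Fin nC) ℂ) :
    Matrix (Fin nA × (Σ i : Fin k, Fin (bL i) × Fin (bR i)) × Fin nC)
           (Fin nA × (Σ i : Fin k, Fin (bL i) × Fin (bR i)) × Fin nC) ℂ :=
  Matrix.of fun p q =>
    if h : p.2.1.1 = q.2.1.1 then
      ((w p.2.1.1 : ℂ)) *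
        ρ₁ p.2.1.1 (p.1, p.2.1.2.1) (q.1, Fin.cast (congrArg bL h.symm) q.2.1.2.1) *
        ρ₂ p.2.1.1 (p.2.1.2.2, p.2.2) (Fin.cast (congrArg bR h.symm) q.2.1.2.2, q.2.2)
    else 0

end

/-!
In a basis adapted to `H_B = ⊕ᵢ H^i_{B_L} ⊗ H^i_{B_R}`, the state and its marginals on `AB`, `BC`
and `B` are block diagonal, with `i`-th block `qᵢ Xᵢ ⊗ Yᵢ` for unit-trace states `Xᵢ`, `Yᵢ`
(e.g. `ρ^i_{AB_L} ⊗ ρ^i_{B_R}` for `AB`). Diagonalising all `Xᵢ`, `Yᵢ` at once, the spectrum of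
such a matrix is `{qᵢ λ μ}`, and `η(xy) = y η(x) + x η(y)` for `η(t) = -t log t` turns its entropy
into `∑ᵢ (η(qᵢ) + qᵢ (S(Xᵢ) + S(Yᵢ)))`. Both sides of `S(AB) + S(BC) = S(ABC) + S(B)` then equal
`∑ᵢ (2 η(qᵢ) + qᵢ (S(ρ^i_{AB_L}) + S(ρ^i_{B_R C}) + S(ρ^i_{B_L}) + S(ρ^i_{B_R})))`.
-/

open Matrix Polynomial Real
open scoped Kronecker

theorem vnEntropy_eq_sum_negMulLog {n : Type*} [Fintype n] [DecidableEq n] {M : Matrix n n ℂ}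
    (hM : M.IsHermitian) :
    vnEntropy M = ∑ i, negMulLog (hM.eigenvalues i) := by
  simp [vnEntropy, dif_pos hM, negMulLog]

theorem Real.sum_negMulLog_mul_of_sum_eq_one {α : Type*} [Fintype α] {a : α → ℝ}
    (ha : ∑ x, a x = 1) (c : ℝ) :
    ∑ x, negMulLog (c * a x) = negMulLog c + c * ∑ x, negMulLog (a x) := by
  simp_rw [negMulLog_mul, Finset.sum_add_distrib, ← Finset.sum_mul, ← Finset.mul_sum, ha, one_mul]

theorem Real.sum_negMulLog_mul_mul_of_sum_eq_one {α β : Type*} [Fintype α] [Fintype β]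
    {a : α → ℝ} {b : β → ℝ} (ha : ∑ x, a x = 1) (hb : ∑ y, b y = 1) (c : ℝ) :
    ∑ p : α × β, negMulLog (c * (a p.1 * b p.2)) =
      negMulLog c + c * (∑ x, negMulLog (a x) + ∑ y, negMulLog (b y)) := by
  simp_rw [Fintype.sum_prod_type, ← mul_assoc, sum_negMulLog_mul_of_sum_eq_one hb,
    Finset.sum_add_distrib, sum_negMulLog_mul_of_sum_eq_one ha, ← Finset.sum_mul, ← Finset.mul_sum,
    ha]
  ring

theorem Matrix.IsHermitian.sum_eigenvalues_eq_one {n : Type*} [Fintype n] [DecidableEq n]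
    {A : Matrix n n ℂ} (hA : A.IsHermitian) (h : A.trace = 1) : ∑ i, hA.eigenvalues i = 1 := by
  have := hA.trace_eq_sum_eigenvalues
  rw [h] at this
  apply Complex.ofReal_injective
  simpa using this.symm

namespace Matrix

variable {n m : Type*} [Fintype n] [DecidableEq n] [Fintype m] [DecidableEq m]

def IsUnitarilyDiagonal (M : Matrix n n ℂ) (d : n → ℝ) : Prop :=
  ∃ U ∈ unitaryGroup n ℂ, M = U * diagonal (fun i => (d i : ℂ)) * star U

theorem IsHermitian.isUnitarilyDiagonal {M : Matrix n n ℂ} (hM : M.IsHermitian) :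
    M.IsUnitarilyDiagonal hM.eigenvalues :=
  ⟨hM.eigenvectorUnitary, hM.eigenvectorUnitary.2, hM.spectral_theorem⟩

namespace IsUnitarilyDiagonal

variable {M : Matrix n n ℂ} {d : n → ℝ}

theorem isHermitian (h : M.IsUnitarilyDiagonal d) : M.IsHermitian := by
  obtain ⟨U, -, rfl⟩ := h
  exact isHermitian_mul_mul_conjTranspose U
    (isHermitian_diagonal_of_self_adjoint _ (by ext; simp))

theorem charpoly_eq (h : M.IsUnitarilyDiagonal d) :
    M.charpoly = ∏ i, (X - C (d i : ℂ)) := by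
  obtain ⟨U, hU, rfl⟩ := h
  rw [charpoly_mul_comm, ← Matrix.mul_assoc, mem_unitaryGroup_iff'.mp hU, Matrix.one_mul,
    charpoly_diagonal]

theorem vnEntropy_eq (h : M.IsUnitarilyDiagonal d) :
    vnEntropy M = ∑ i, negMulLog (d i) := by
  have hM := h.isHermitian
  -- `d` and the eigenvalues are both read off the roots of the characteristic polynomial.
  have hroots := hM.roots_charpoly_eq_eigenvalues
  rw [h.charpoly_eq, roots_prod _ _ (by simp [Finset.prod_ne_zero_iff, X_sub_C_ne_zero]),
    ← Multiset.map_map _ hM.eigenvalues] at hroots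
  simp only [roots_X_sub_C, Multiset.bind_singleton] at hroots
  have hspec : Finset.univ.val.map d = Finset.univ.val.map hM.eigenvalues :=
    Multiset.map_injective Complex.ofReal_injective (by simpa [Multiset.map_map] using hroots)
  have := congrArg (fun s => (s.map negMulLog).sum) hspec
  simp only [Multiset.map_map, Function.comp_def, ← Finset.sum_eq_multiset_sum] at this
  rw [this, vnEntropy_eq_sum_negMulLog hM]

theorem kronecker {A : Matrix n n ℂ} {B : Matrix m m ℂ} {a : n → ℝ} {b : m → ℝ}
    (hA : A.IsUnitarilyDiagonal a) (hB : B.IsUnitarilyDiagonal b) :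
    (A ⊗ₖ B).IsUnitarilyDiagonal fun p => a p.1 * b p.2 := by
  obtain ⟨U, hU, rfl⟩ := hA
  obtain ⟨V, hV, rfl⟩ := hB
  refine ⟨U ⊗ₖ V, kronecker_mem_unitary hU hV, ?_⟩
  simp only [star_eq_conjTranspose, conjTranspose_kronecker, mul_kronecker_mul,
    diagonal_kronecker_diagonal, Complex.ofReal_mul]

theorem real_smul (h : M.IsUnitarilyDiagonal d) (c : ℝ) :
    ((c : ℂ) • M).IsUnitarilyDiagonal (c • d) := by
  obtain ⟨U, hU, rfl⟩ := h
  refine ⟨U, hU, ?_⟩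
  have hdiag : diagonal (fun i => ((c • d) i : ℂ)) = (c : ℂ) • diagonal fun i => (d i : ℂ) := by
    simp [← diagonal_smul]
  rw [hdiag, Matrix.mul_smul, Matrix.smul_mul]

theorem reindex (h : M.IsUnitarilyDiagonal d) (e : n ≃ m) :
    (reindex e e M).IsUnitarilyDiagonal (d ∘ e.symm) := by
  obtain ⟨U, hU, rfl⟩ := h
  refine ⟨Matrix.reindex e e U, ?_, ?_⟩
  · rw [mem_unitaryGroup_iff, star_eq_conjTranspose, conjTranspose_reindex, reindex_apply,
      reindex_apply, submatrix_mul_equiv, ← star_eq_conjTranspose, mem_unitaryGroup_iff.mp hU,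
      submatrix_one_equiv]
  · rw [reindex_apply, reindex_apply, star_eq_conjTranspose, star_eq_conjTranspose,
      conjTranspose_submatrix, ← submatrix_mul_equiv _ _ _ e.symm,
      ← submatrix_mul_equiv _ _ _ e.symm, submatrix_diagonal_equiv]
    rfl

theorem blockDiagonal' {ι : Type*} [Fintype ι] [DecidableEq ι] {p : ι → Type*}
    [∀ i, Fintype (p i)] [∀ i, DecidableEq (p i)] {M : ∀ i, Matrix (p i) (p i) ℂ}
    {d : ∀ i, p i → ℝ} (h : ∀ i, (M i).IsUnitarilyDiagonal (d i)) :
    (blockDiagonal' M).IsUnitarilyDiagonal fun x => d x.1 x.2 := by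
  choose U hU hM using h
  obtain rfl : M = _ := funext hM
  refine ⟨Matrix.blockDiagonal' U, ?_, ?_⟩
  · rw [mem_unitaryGroup_iff, star_eq_conjTranspose, blockDiagonal'_conjTranspose,
      ← blockDiagonal'_mul]
    simp_rw [← star_eq_conjTranspose, fun i => mem_unitaryGroup_iff.mp (hU i)]
    exact blockDiagonal'_one
  · rw [star_eq_conjTranspose, blockDiagonal'_conjTranspose,
      ← blockDiagonal'_diagonal fun i x => (d i x : ℂ), ← blockDiagonal'_mul, ← blockDiagonal'_mul]
    rfl

end IsUnitarilyDiagonal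

section PartialTrace

variable {α β R : Type*} [AddCommMonoid R]

def partialTraceLeft [Fintype α] (ρ : Matrix (α × β) (α × β) R) : Matrix β β R :=
  of fun b b' => ∑ a, ρ (a, b) (a, b')

def partialTraceRight [Fintype β] (ρ : Matrix (α × β) (α × β) R) : Matrix α α R :=
  of fun a a' => ∑ b, ρ (a, b) (a', b)

@[simp]
theorem partialTraceLeft_apply [Fintype α] (ρ : Matrix (α × β) (α × β) R) (b b' : β) :
    partialTraceLeft ρ b b' = ∑ a, ρ (a, b) (a, b') := rfl

@[simp]
theorem partialTraceRight_apply [Fintype β] (ρ : Matrix (α × β) (α × β) R) (a a' : α) :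
    partialTraceRight ρ a a' = ∑ b, ρ (a, b) (a', b) := rfl

theorem trace_partialTraceLeft [Fintype α] [Fintype β] (ρ : Matrix (α × β) (α × β) R) :
    (partialTraceLeft ρ).trace = ρ.trace := by
  simp [trace, Fintype.sum_prod_type, Finset.sum_comm (γ := α)]

theorem trace_partialTraceRight [Fintype α] [Fintype β] (ρ : Matrix (α × β) (α × β) R) :
    (partialTraceRight ρ).trace = ρ.trace := by
  simp [trace, Fintype.sum_prod_type]

theorem IsHermitian.partialTraceLeft [Fintype α] [StarAddMonoid R]
    {ρ : Matrix (α × β) (α × β) R} (h : ρ.IsHermitian) : (partialTraceLeft ρ).IsHermitian := by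
  ext b b'
  simp only [conjTranspose_apply, partialTraceLeft_apply, star_sum]
  exact Finset.sum_congr rfl fun a _ => h.apply _ _

theorem IsHermitian.partialTraceRight [Fintype β] [StarAddMonoid R]
    {ρ : Matrix (α × β) (α × β) R} (h : ρ.IsHermitian) : (partialTraceRight ρ).IsHermitian := by
  ext a a'
  simp only [conjTranspose_apply, partialTraceRight_apply, star_sum]
  exact Finset.sum_congr rfl fun b _ => h.apply _ _

end PartialTrace

end Matrix

theorem vnEntropy_reindex {n m : Type*} [Fintype n] [DecidableEq n] [Fintype m] [DecidableEq m]
    (M : Matrix n n ℂ) (e : n ≃ m) : vnEntropy (reindex e e M) = vnEntropy M := by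
  by_cases hM : M.IsHermitian
  swap
  · rw [vnEntropy, vnEntropy, dif_neg hM, dif_neg (mt (isHermitian_reindex_iff e).mp hM)]
  rw [(hM.isUnitarilyDiagonal.reindex e).vnEntropy_eq, hM.isUnitarilyDiagonal.vnEntropy_eq]
  exact Equiv.sum_comp e.symm (fun i => negMulLog (hM.eigenvalues i))

theorem vnEntropy_blockDiagonal'_smul_kronecker {ι : Type*} [Fintype ι] [DecidableEq ι]
    {p q : ι → Type*} [∀ i, Fintype (p i)] [∀ i, DecidableEq (p i)] [∀ i, Fintype (q i)]
    [∀ i, DecidableEq (q i)] (w : ι → ℝ) {A : ∀ i, Matrix (p i) (p i) ℂ}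
    {B : ∀ i, Matrix (q i) (q i) ℂ} (hA : ∀ i, (A i).IsHermitian) (hB : ∀ i, (B i).IsHermitian)
    (tA : ∀ i, (A i).trace = 1) (tB : ∀ i, (B i).trace = 1) :
    vnEntropy (blockDiagonal' fun i => (w i : ℂ) • (A i ⊗ₖ B i)) =
      ∑ i, (negMulLog (w i) + w i * (vnEntropy (A i) + vnEntropy (B i))) := by
  have hblock (i : ι) : ((w i : ℂ) • (A i ⊗ₖ B i)).IsUnitarilyDiagonal
      fun y => w i * ((hA i).eigenvalues y.1 * (hB i).eigenvalues y.2) :=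
    ((hA i).isUnitarilyDiagonal.kronecker (hB i).isUnitarilyDiagonal).real_smul (w i)
  rw [(IsUnitarilyDiagonal.blockDiagonal' hblock).vnEntropy_eq, Fintype.sum_sigma]
  refine Finset.sum_congr rfl fun i _ => ?_
  dsimp only
  rw [Real.sum_negMulLog_mul_mul_of_sum_eq_one ((hA i).sum_eigenvalues_eq_one (tA i))
    ((hB i).sum_eigenvalues_eq_one (tB i)), vnEntropy_eq_sum_negMulLog (hA i),
    vnEntropy_eq_sum_negMulLog (hB i)]

namespace Equiv

variable {ι α γ : Type*} {L R : ι → Type*}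

def sigmaProdAssocLeft : (Σ i, (α × L i) × R i) ≃ α × Σ i, L i × R i where
  toFun s := (s.2.1.1, ⟨s.1, s.2.1.2, s.2.2⟩)
  invFun x := ⟨x.2.1, (x.1, x.2.2.1), x.2.2.2⟩

def sigmaProdAssocRight : (Σ i, L i × (R i × γ)) ≃ (Σ i, L i × R i) × γ where
  toFun s := (⟨s.1, s.2.1, s.2.2.1⟩, s.2.2.2)
  invFun x := ⟨x.1.1, x.1.2.1, x.1.2.2, x.2⟩

def sigmaProdAssocLeftRight : (Σ i, (α × L i) × (R i × γ)) ≃ α × (Σ i, L i × R i) × γ where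
  toFun s := (s.2.1.1, ⟨s.1, s.2.1.2, s.2.2.1⟩, s.2.2.2)
  invFun x := ⟨x.2.1.1, (x.1, x.2.1.2.1), x.2.1.2.2, x.2.2⟩

end Equiv

section blockDM

variable {nA nC k : ℕ} {bL bR : Fin k → ℕ} (w : Fin k → ℝ)
  (ρ₁ : ∀ i : Fin k, Matrix (Fin nA × Fin (bL i)) (Fin nA × Fin (bL i)) ℂ)
  (ρ₂ : ∀ i : Fin k, Matrix (Fin (bR i) × Fin nC) (Fin (bR i) × Fin nC) ℂ)

theorem blockDM_apply_of_eq (a a' : Fin nA) (i : Fin k) (l l' : Fin (bL i)) (r r' : Fin (bR i))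
    (c c' : Fin nC) :
    blockDM w ρ₁ ρ₂ (a, ⟨i, l, r⟩, c) (a', ⟨i, l', r'⟩, c') =
      w i * ρ₁ i (a, l) (a', l') * ρ₂ i (r, c) (r', c') := by
  simp [blockDM]

theorem blockDM_apply_of_ne {a a' : Fin nA} {i i' : Fin k} {l : Fin (bL i)} {l' : Fin (bL i')}
    {r : Fin (bR i)} {r' : Fin (bR i')} {c c' : Fin nC} (h : i ≠ i') :
    blockDM w ρ₁ ρ₂ (a, ⟨i, l, r⟩, c) (a', ⟨i', l', r'⟩, c') = 0 := by
  simp [blockDM, h]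

theorem blockDM_eq_reindex :
    blockDM w ρ₁ ρ₂ = reindex Equiv.sigmaProdAssocLeftRight Equiv.sigmaProdAssocLeftRight
      (blockDiagonal' fun i => (w i : ℂ) • (ρ₁ i ⊗ₖ ρ₂ i)) := by
  ext ⟨a, ⟨i, l, r⟩, c⟩ ⟨a', ⟨i', l', r'⟩, c'⟩
  rcases eq_or_ne i i' with rfl | h
  · simp [blockDM_apply_of_eq, Equiv.sigmaProdAssocLeftRight, mul_assoc]
  · simp [blockDM_apply_of_ne w ρ₁ ρ₂ h, Equiv.sigmaProdAssocLeftRight,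
      blockDiagonal'_apply_ne _ _ _ h]

theorem ptrC_blockDM_eq_reindex :
    ptrC (blockDM w ρ₁ ρ₂) = reindex Equiv.sigmaProdAssocLeft Equiv.sigmaProdAssocLeft
      (blockDiagonal' fun i => (w i : ℂ) • (ρ₁ i ⊗ₖ partialTraceRight (ρ₂ i))) := by
  ext ⟨a, ⟨i, l, r⟩⟩ ⟨a', ⟨i', l', r'⟩⟩
  rcases eq_or_ne i i' with rfl | h
  · simp [ptrC, blockDM_apply_of_eq, Equiv.sigmaProdAssocLeft, Finset.mul_sum, mul_assoc]
  · simp [ptrC, blockDM_apply_of_ne w ρ₁ ρ₂ h, Equiv.sigmaProdAssocLeft,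
      blockDiagonal'_apply_ne _ _ _ h]

theorem ptrA_blockDM_eq_reindex :
    ptrA (blockDM w ρ₁ ρ₂) = reindex Equiv.sigmaProdAssocRight Equiv.sigmaProdAssocRight
      (blockDiagonal' fun i => (w i : ℂ) • (partialTraceLeft (ρ₁ i) ⊗ₖ ρ₂ i)) := by
  ext ⟨⟨i, l, r⟩, c⟩ ⟨⟨i', l', r'⟩, c'⟩
  rcases eq_or_ne i i' with rfl | h
  · simp [ptrA, blockDM_apply_of_eq, Equiv.sigmaProdAssocRight, Finset.mul_sum, Finset.sum_mul,
      mul_assoc]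
  · simp [ptrA, blockDM_apply_of_ne w ρ₁ ρ₂ h, Equiv.sigmaProdAssocRight,
      blockDiagonal'_apply_ne _ _ _ h]

theorem ptrAC_blockDM :
    ptrAC (blockDM w ρ₁ ρ₂) = blockDiagonal' fun i =>
      (w i : ℂ) • (partialTraceLeft (ρ₁ i) ⊗ₖ partialTraceRight (ρ₂ i)) := by
  ext ⟨i, l, r⟩ ⟨i', l', r'⟩
  rcases eq_or_ne i i' with rfl | h
  · simp only [ptrAC, of_apply, blockDM_apply_of_eq, mul_assoc, Complex.coe_smul,
      blockDiagonal'_apply_eq, Matrix.smul_apply, kroneckerMap_apply, partialTraceLeft_apply,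
      partialTraceRight_apply, Finset.mul_sum, Finset.sum_mul, Complex.real_smul]
    exact Finset.sum_comm
  · simp [ptrAC, blockDM_apply_of_ne w ρ₁ ρ₂ h, blockDiagonal'_apply_ne _ _ _ h]

end blockDM

theorem blockDM_vanishing_CMI_general (nA nC k : ℕ) (bL bR : Fin k → ℕ)
    (w : Fin k → ℝ)
    (ρ₁ : ∀ i : Fin k, Matrix (Fin nA × Fin (bL i)) (Fin nA × Fin (bL i)) ℂ)
    (ρ₂ : ∀ i : Fin k, Matrix (Fin (bR i) × Fin nC) (Fin (bR i) × Fin nC) ℂ)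
    (hρ₁ : ∀ i, (ρ₁ i).PosSemidef) (ht₁ : ∀ i, (ρ₁ i).trace = 1)
    (hρ₂ : ∀ i, (ρ₂ i).PosSemidef) (ht₂ : ∀ i, (ρ₂ i).trace = 1) :
    vnEntropy (ptrC (blockDM w ρ₁ ρ₂)) + vnEntropy (ptrA (blockDM w ρ₁ ρ₂)) =
      vnEntropy (blockDM w ρ₁ ρ₂) + vnEntropy (ptrAC (blockDM w ρ₁ ρ₂)) := by
  have hρ₁' i := (hρ₁ i).isHermitian
  have hρ₂' i := (hρ₂ i).isHermitian
  have hσ₁ i := (hρ₁' i).partialTraceLeft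
  have hσ₂ i := (hρ₂' i).partialTraceRight
  have tσ₁ i := (trace_partialTraceLeft (ρ₁ i)).trans (ht₁ i)
  have tσ₂ i := (trace_partialTraceRight (ρ₂ i)).trans (ht₂ i)
  rw [ptrC_blockDM_eq_reindex, ptrA_blockDM_eq_reindex, ptrAC_blockDM, blockDM_eq_reindex,
    vnEntropy_reindex, vnEntropy_reindex, vnEntropy_reindex,
    vnEntropy_blockDiagonal'_smul_kronecker w hρ₁' hσ₂ ht₁ tσ₂,
    vnEntropy_blockDiagonal'_smul_kronecker w hσ₁ hρ₂' tσ₁ ht₂,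
    vnEntropy_blockDiagonal'_smul_kronecker w hρ₁' hρ₂' ht₁ ht₂,
    vnEntropy_blockDiagonal'_smul_kronecker w hσ₁ hσ₂ tσ₁ tσ₂, ← Finset.sum_add_distrib,
    ← Finset.sum_add_distrib]
  exact Finset.sum_congr rfl fun i _ => by ring

/-- If `ρ_ABC = ∑ᵢ qᵢ ρ¹ᵢ_{A B_L} ⊗ ρ²ᵢ_{B_R C}` with respect to an
orthogonal decomposition `H_B = ⊕ᵢ H^i_{B_L} ⊗ H^i_{B_R}`, then `I(A:C|B) = 0`,
i.e. `S(AB) + S(BC) = S(ABC) + S(B)`. -/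
theorem blockDM_vanishing_CMI (nA nC k : ℕ) (bL bR : Fin k → ℕ)
    (w : Fin k → ℝ)
    (ρ₁ : ∀ i : Fin k, Matrix (Fin nA × Fin (bL i)) (Fin nA × Fin (bL i)) ℂ)
    (ρ₂ : ∀ i : Fin k, Matrix (Fin (bR i) × Fin nC) (Fin (bR i) × Fin nC) ℂ)
    (hw : ∀ i, 0 ≤ w i) (hws : ∑ i, w i = 1)
    (hρ₁ : ∀ i, (ρ₁ i).PosSemidef) (ht₁ : ∀ i, (ρ₁ i).trace = 1)
    (hρ₂ : ∀ i, (ρ₂ i).PosSemidef) (ht₂ : ∀ i, (ρ₂ i).trace = 1) :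
    vnEntropy (ptrC (blockDM w ρ₁ ρ₂)) + vnEntropy (ptrA (blockDM w ρ₁ ρ₂)) =
      vnEntropy (blockDM w ρ₁ ρ₂) + vnEntropy (ptrAC (blockDM w ρ₁ ρ₂)) :=
  blockDM_vanishing_CMI_general nA nC k bL bR w ρ₁ ρ₂ hρ₁ ht₁ hρ₂ ht₂
end
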